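/- Let Ψ:[t₀,∞)→(0,∞) be non-decreasing and let f be a dimension function. If the double series ∑_{q=1}^∞ ∑_{1≤p≤q} f(1/(p·q·Ψ(q))) converges, then the f-dimensional Hausdorff measure of G(Ψ) is zero. -/

import Mathlib

open Filter MeasureTheory Set

/-- The Gauss map `T(x) = 1/x mod 1`, with `T(0) = 0`. -/
noncomputable def gaussMap (x : ℝ) : ℝ := if x = 0 then 0 else Int.fract (1 / x)

/-- `cfA x n` is the `n`-th partial quotient `a_n(x)` of the continued fraction
expansion of `x ∈ [0,1)`, for `n ≥ 1`: `a_n(x) = ⌊1 / T^{n-1}(x)⌋`. -/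
noncomputable def cfA (x : ℝ) (n : ℕ) : ℕ := ⌊1 / (gaussMap^[n - 1] x)⌋₊

/-- `cfQ x n` is the denominator `q_n(x)` of the `n`-th convergent of `x`:
`q₀ = 1`, `q₁ = a₁`, `q_{n+2} = a_{n+2} q_{n+1} + q_n`. -/
noncomputable def cfQ (x : ℝ) : ℕ → ℕ
  | 0 => 1
  | 1 => cfA x 1
  | (n + 2) => cfA x (n + 2) * cfQ x (n + 1) + cfQ x n

/-- `G(Ψ)`: the set of irrational `x ∈ [0,1)` with `a_n(x) a_{n+1}(x) > Ψ(q_n(x))` for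
infinitely many `n`. -/
def GSet (Ψ : ℝ → ℝ) : Set ℝ :=
  {x | x ∈ Ico (0 : ℝ) 1 ∧ Irrational x ∧
    {n : ℕ | 0 < n ∧ Ψ (cfQ x n) < (cfA x n : ℝ) * cfA x (n + 1)}.Infinite}

/-- A dimension function: an increasing continuous function `f : (0,∞) → (0,∞)` with
`f(r) → 0` as `r → 0`. -/
def IsDimensionFunction (f : ℝ → ℝ) : Prop :=
  (∀ x, 0 < x → 0 < f x) ∧ StrictMonoOn f (Ioi 0) ∧ ContinuousOn f (Ioi 0) ∧
    Tendsto f (nhdsWithin 0 (Ioi 0)) (nhds 0)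

/-- The `f`-dimensional Hausdorff measure on `ℝ`, for a dimension function `f`. -/
noncomputable def hausdorffWith (f : ℝ → ℝ) : Measure ℝ :=
  Measure.mkMetric fun r => ENNReal.ofReal (f r.toReal)

open scoped ENNReal Topology

/-!
If `a_n a_{n+1} > Ψ(q_n)`, then `q_n ≥ a_n q_{n-1}` turns the classical bound
`|x - p_n/q_n| ≤ 1/(a_{n+1} q_n²)` into `|x - p_n/q_n| ≤ 1/(q_{n-1} q_n Ψ(q_n))`. As
`p_n q_{n-1} ≡ ±1 (mod q_n)`, the numerator `p_n` is determined by `q_n`, `q_{n-1}` and a sign,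
so `G(Ψ)` lies in the limsup over `q` of unions of intervals of length `1/(r q Ψ(q))`, indexed
by `1 ≤ r ≤ q`, a sign and a side. Their `f`-cost is four times the `q`-th term of the double
series, and the Hausdorff–Cantelli lemma gives `H^f(G(Ψ)) = 0`.
-/

section HausdorffCantelli

variable {X : Type*} [EMetricSpace X] [MeasurableSpace X] [BorelSpace X]
  {ι : ℕ → Type*} [∀ q, Countable (ι q)]

theorem MeasureTheory.Measure.mkMetric_limsup_eq_zero (m : ℝ≥0∞ → ℝ≥0∞)
    (E : ∀ q, ι q → Set X) (r : ℕ → ℝ≥0∞) (hr : Tendsto r atTop (𝓝 0))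
    (hdiam : ∀ q j, Metric.ediam (E q j) ≤ r q)
    (hsum : ∑' q, ∑' j, m (Metric.ediam (E q j)) ≠ ∞) :
    Measure.mkMetric m (limsup (fun q => ⋃ j, E q j) atTop) = 0 := by
  have hr_tail : Tendsto (fun N => ⨆ k, r (k + N)) atTop (𝓝 0) := by
    rw [ENNReal.tendsto_nhds_zero] at hr ⊢
    intro ε hε
    obtain ⟨Q, hQ⟩ := eventually_atTop.1 (hr ε hε)
    filter_upwards [eventually_ge_atTop Q] with N hN
    exact iSup_le fun k => hQ _ (by omega)
  refine le_zero_iff.1 <| (Measure.mkMetric_le_liminf_tsum _ _ hr_tail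
    (fun N (i : Σ k, ι (k + N)) => E (i.1 + N) i.2)
    (.of_forall fun N i => (hdiam _ _).trans (le_iSup (fun k => r (k + N)) i.1))
    (.of_forall fun N => ?_) m).trans ?_
  · intro x hx
    obtain ⟨q, hq, hxq⟩ := frequently_atTop.1 (mem_limsup_iff_frequently_mem.1 hx) N
    obtain ⟨j, hj⟩ := mem_iUnion.1 hxq
    obtain ⟨k, rfl⟩ : ∃ k, q = k + N := ⟨q - N, by omega⟩
    exact mem_iUnion.2 ⟨⟨k, j⟩, hj⟩
  · simp_rw [ENNReal.tsum_sigma']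
    exact (ENNReal.tendsto_sum_nat_add _ hsum).liminf_eq.le

end HausdorffCantelli

theorem Irrational.gaussMap {x : ℝ} (hx : Irrational x) : Irrational (gaussMap x) := by
  rw [_root_.gaussMap, if_neg hx.ne_zero, ← Int.self_sub_floor, one_div]
  exact hx.inv.sub_intCast _

theorem gaussMap_mem_Ioo {x : ℝ} (hx : Irrational x) : gaussMap x ∈ Ioo 0 1 := by
  have h := hx.gaussMap.ne_zero
  rw [_root_.gaussMap, if_neg hx.ne_zero] at h ⊢
  exact ⟨(Int.fract_nonneg _).lt_of_ne' h, Int.fract_lt_one _⟩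

theorem Irrational.gaussMap_iterate {x : ℝ} (hx : Irrational x) (n : ℕ) :
    Irrational (_root_.gaussMap^[n] x) := by
  induction n with
  | zero => exact hx
  | succ n ih => rw [Function.iterate_succ_apply']; exact ih.gaussMap

section GaussOrbit

variable {x : ℝ} (hx : Irrational x) (hx01 : x ∈ Ioo 0 1)
include hx hx01

theorem gaussMap_iterate_mem_Ioo : ∀ n, gaussMap^[n] x ∈ Ioo 0 1
  | 0 => hx01
  | n + 1 => by
    rw [Function.iterate_succ_apply']
    exact gaussMap_mem_Ioo (hx.gaussMap_iterate n)

theorem cfA_succ_add_gaussMap_iterate (n : ℕ) :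
    (cfA x (n + 1) : ℝ) + gaussMap^[n + 1] x = (gaussMap^[n] x)⁻¹ := by
  have ht := (gaussMap_iterate_mem_Ioo hx hx01 n).1
  rw [Function.iterate_succ_apply', gaussMap, if_neg ht.ne', cfA, Nat.add_sub_cancel, one_div,
    natCast_floor_eq_intCast_floor (by positivity), Int.floor_add_fract]

theorem one_le_cfA_succ (n : ℕ) : 1 ≤ cfA x (n + 1) := by
  have ht := gaussMap_iterate_mem_Ioo hx hx01 n
  rw [cfA, Nat.add_sub_cancel, Nat.one_le_floor_iff, one_div]
  exact ((one_lt_inv₀ ht.1).2 ht.2).le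

theorem cfA_succ_mul_le_one (n : ℕ) : (cfA x (n + 1) : ℝ) * gaussMap^[n] x ≤ 1 := by
  have ht := (gaussMap_iterate_mem_Ioo hx hx01 n).1
  rw [cfA, Nat.add_sub_cancel, ← le_div_iff₀ ht]
  exact Nat.floor_le (by positivity)

end GaussOrbit

noncomputable def cfP (x : ℝ) : ℕ → ℕ
  | 0 => 0
  | 1 => 1
  | (n + 2) => cfA x (n + 2) * cfP x (n + 1) + cfP x n

section Continuants

theorem cfP_mul_cfQ_sub (x : ℝ) (n : ℕ) :
    (cfP x (n + 1) * cfQ x n : ℤ) - cfP x n * cfQ x (n + 1) = (-1) ^ n := by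
  induction n with
  | zero => simp [cfP, cfQ]
  | succ n ih =>
    rw [cfP, cfQ, pow_succ, ← ih]
    push_cast
    ring

variable {x : ℝ}

theorem cfA_mul_cfQ_le (n : ℕ) : cfA x (n + 1) * cfQ x n ≤ cfQ x (n + 1) := by
  cases n with
  | zero => simp [cfQ]
  | succ n => exact Nat.le_add_right _ _

variable (ha : ∀ n, 1 ≤ cfA x (n + 1))
include ha

theorem one_le_cfQ (n : ℕ) : 1 ≤ cfQ x n := by
  induction n using Nat.twoStepInduction with
  | zero => rfl
  | one => exact ha 0
  | more n _ ih => rw [cfQ]; nlinarith [ha (n + 1)]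

theorem cfQ_le_cfQ_succ (n : ℕ) : cfQ x n ≤ cfQ x (n + 1) :=
  (Nat.le_mul_of_pos_left _ (ha n)).trans (cfA_mul_cfQ_le n)

theorem le_cfQ (n : ℕ) : n ≤ cfQ x n := by
  induction n using Nat.twoStepInduction with
  | zero => exact Nat.zero_le _
  | one => exact ha 0
  | more n _ ih => rw [cfQ]; nlinarith [ha (n + 1), one_le_cfQ ha n]

theorem cfP_le_cfQ (n : ℕ) : cfP x n ≤ cfQ x n := by
  induction n using Nat.twoStepInduction with
  | zero => exact Nat.zero_le _
  | one => exact ha 0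
  | more n ih₀ ih₁ => rw [cfP, cfQ]; gcongr

theorem cfP_lt_cfQ (n : ℕ) : cfP x (n + 2) < cfQ x (n + 2) := by
  induction n with
  | zero => simp only [cfP, cfQ]; nlinarith [ha 0, ha 1]
  | succ n ih =>
    rw [cfP, cfQ]
    nlinarith [ha (n + 2), cfP_le_cfQ ha (n + 1)]

end Continuants

section Approximation

variable {x : ℝ} (hx : Irrational x) (hx01 : x ∈ Ioo 0 1)
include hx hx01

theorem mul_cfQ_add_eq_cfP_add (n : ℕ) :
    x * (cfQ x (n + 1) + cfQ x n * gaussMap^[n + 1] x)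
      = cfP x (n + 1) + cfP x n * gaussMap^[n + 1] x := by
  induction n with
  | zero =>
    have h := cfA_succ_add_gaussMap_iterate hx hx01 0
    simp only [cfQ, cfP, Nat.cast_one, Nat.cast_zero, one_mul, zero_mul, add_zero] at h ⊢
    rw [h, Function.iterate_zero_apply, mul_inv_cancel₀ hx01.1.ne']
  | succ n ih =>
    have ht := (gaussMap_iterate_mem_Ioo hx hx01 (n + 1)).1
    have h : gaussMap^[n + 1] x * (cfA x (n + 2) + gaussMap^[n + 2] x) = 1 := by
      rw [cfA_succ_add_gaussMap_iterate hx hx01 (n + 1), mul_inv_cancel₀ ht.ne']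
    rw [cfQ, cfP]
    push_cast
    linear_combination (cfA x (n + 2) + gaussMap^[n + 2] x) * ih + (cfP x n - x * cfQ x n) * h

theorem abs_sub_cfP_div_cfQ_le (n : ℕ) :
    |x - cfP x (n + 1) / cfQ x (n + 1)| ≤ 1 / (cfA x (n + 2) * cfQ x (n + 1) ^ 2) := by
  have ha := one_le_cfA_succ hx hx01
  have ht := gaussMap_iterate_mem_Ioo hx hx01 (n + 1)
  set t := gaussMap^[n + 1] x
  have hq₀ : (0 : ℝ) < cfQ x n := by exact_mod_cast one_le_cfQ ha n
  have hq₁ : (0 : ℝ) < cfQ x (n + 1) := by exact_mod_cast one_le_cfQ ha (n + 1)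
  have ha₂ : (0 : ℝ) < cfA x (n + 2) := by exact_mod_cast ha (n + 1)
  have hdet : (cfP x (n + 1) * cfQ x n - cfP x n * cfQ x (n + 1) : ℝ) = (-1) ^ n := by
    exact_mod_cast cfP_mul_cfQ_sub x n
  have hD : (0 : ℝ) < cfQ x (n + 1) + cfQ x n * t := add_pos hq₁ (mul_pos hq₀ ht.1)
  have heq : x - cfP x (n + 1) / cfQ x (n + 1)
      = -(-1) ^ n * t / (cfQ x (n + 1) * (cfQ x (n + 1) + cfQ x n * t)) := by
    rw [eq_div_iff (by positivity), ← hdet]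
    field_simp
    linear_combination (cfQ x (n + 1) : ℝ) * mul_cfQ_add_eq_cfP_add hx hx01 n
  calc |x - cfP x (n + 1) / cfQ x (n + 1)|
      = t / (cfQ x (n + 1) * (cfQ x (n + 1) + cfQ x n * t)) := by
        rw [heq, abs_div, abs_mul, abs_neg, abs_neg_one_pow, one_mul, abs_of_pos ht.1,
          abs_of_pos (mul_pos hq₁ hD)]
    _ ≤ t / cfQ x (n + 1) ^ 2 := by
        rw [sq]
        gcongr
        · exact ht.1.le
        · exact le_add_of_nonneg_right (mul_pos hq₀ ht.1).le
    _ = cfA x (n + 2) * t / (cfA x (n + 2) * cfQ x (n + 1) ^ 2) :=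
        (mul_div_mul_left _ _ ha₂.ne').symm
    _ ≤ 1 / (cfA x (n + 2) * cfQ x (n + 1) ^ 2) := by
        gcongr
        exact cfA_succ_mul_le_one hx hx01 (n + 1)

theorem abs_sub_cfP_div_cfQ_le_of_lt {c : ℝ} (hc : 0 < c) (n : ℕ)
    (h : c < cfA x (n + 1) * cfA x (n + 2)) :
    |x - cfP x (n + 1) / cfQ x (n + 1)| ≤ 1 / (cfQ x n * cfQ x (n + 1) * c) := by
  have ha := one_le_cfA_succ hx hx01
  have hq₀ : (0 : ℝ) < cfQ x n := by exact_mod_cast one_le_cfQ ha n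
  have hq₁ : (0 : ℝ) < cfQ x (n + 1) := by exact_mod_cast one_le_cfQ ha (n + 1)
  have hmul : (cfA x (n + 1) * cfQ x n : ℝ) ≤ cfQ x (n + 1) := by
    exact_mod_cast cfA_mul_cfQ_le n
  refine (abs_sub_cfP_div_cfQ_le hx hx01 n).trans (one_div_le_one_div_of_le (by positivity) ?_)
  calc (cfQ x n * cfQ x (n + 1) * c : ℝ)
      ≤ cfQ x n * cfQ x (n + 1) * (cfA x (n + 1) * cfA x (n + 2)) := by gcongr
    _ = cfA x (n + 1) * cfQ x n * cfA x (n + 2) * cfQ x (n + 1) := by ring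
    _ ≤ cfQ x (n + 1) * cfA x (n + 2) * cfQ x (n + 1) := by gcongr
    _ = cfA x (n + 2) * cfQ x (n + 1) ^ 2 := by ring

end Approximation

/-- Since `p_n q_{n-1} ≡ (-1)^(n-1) (mod q_n)`, the numerator `p_n` is recovered from `q_n`,
`q_{n-1}` and the parity of `n`. -/
def cfCentre (q r : ℕ) (k : Fin 2) : ℕ := (((-1) ^ (k : ℕ) * r : ZMod q)⁻¹).val

theorem cfCentre_cfQ {x : ℝ} (ha : ∀ n, 1 ≤ cfA x (n + 1)) (n : ℕ) :
    ∃ k, cfCentre (cfQ x (n + 2)) (cfQ x (n + 1)) k = cfP x (n + 2) := by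
  set q := cfQ x (n + 2)
  have hdet := congrArg (Int.cast : ℤ → ZMod q) (cfP_mul_cfQ_sub x (n + 1))
  push_cast at hdet
  rw [ZMod.natCast_self, mul_zero, sub_zero] at hdet
  refine ⟨⟨(n + 1) % 2, Nat.mod_lt _ two_pos⟩, ?_⟩
  have hinv : (-1) ^ ((n + 1) % 2) * (cfQ x (n + 1) : ZMod q) * cfP x (n + 2) = 1 := by
    rw [← neg_one_pow_eq_pow_mod_two, mul_assoc, mul_comm (cfQ x (n + 1) : ZMod q), hdet,
      ← pow_add, ← two_mul, pow_mul, neg_one_sq, one_pow]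
  rw [cfCentre, ZMod.inv_eq_of_mul_eq_one _ _ _ hinv, ZMod.val_cast_of_lt (cfP_lt_cfQ ha n)]

/-- Covering the ball of radius `ρ` about `a` by these two intervals of length `ρ`, rather than
by the ball itself, avoids a doubling condition on the dimension function. -/
def halfInterval (a ρ : ℝ) : Bool → Set ℝ
  | true => Icc (a - ρ) a
  | false => Icc a (a + ρ)

theorem ediam_halfInterval (a ρ : ℝ) (b : Bool) :
    Metric.ediam (halfInterval a ρ b) = ENNReal.ofReal ρ := by
  cases b <;> simp [halfInterval, Real.ediam_Icc]

theorem exists_mem_halfInterval {x a ρ : ℝ} (h : |x - a| ≤ ρ) :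
    ∃ b, x ∈ halfInterval a ρ b := by
  obtain ⟨h₁, h₂⟩ := abs_le.1 h
  rcases le_total x a with hxa | hax
  · exact ⟨true, by linarith, hxa⟩
  · exact ⟨false, hax, by linarith⟩

/-- The index `(r, k, b)` stands for `r = q_{n-1}`, the parity `k` of `n - 1`, and the side `b`
of `p_n / q_n` on which `x` lies. -/
def approxCover (Ψ : ℝ → ℝ) (q : ℕ) (j : Finset.Icc 1 q × Fin 2 × Bool) : Set ℝ :=
  halfInterval (cfCentre q j.1 j.2.1 / q) (1 / ((j.1 : ℕ) * q * Ψ q)) j.2.2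

theorem mem_iUnion_approxCover {x : ℝ} (hx : Irrational x) (hx01 : x ∈ Ioo 0 1) {Ψ : ℝ → ℝ}
    (n : ℕ) (hΨ : 0 < Ψ (cfQ x (n + 2)))
    (h : Ψ (cfQ x (n + 2)) < cfA x (n + 2) * cfA x (n + 3)) :
    x ∈ ⋃ j, approxCover Ψ (cfQ x (n + 2)) j := by
  have ha := one_le_cfA_succ hx hx01
  obtain ⟨k, hk⟩ := cfCentre_cfQ ha n
  have hr : cfQ x (n + 1) ∈ Finset.Icc 1 (cfQ x (n + 2)) :=
    Finset.mem_Icc.2 ⟨one_le_cfQ ha _, cfQ_le_cfQ_succ ha _⟩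
  obtain ⟨b, hb⟩ :=
    exists_mem_halfInterval (abs_sub_cfP_div_cfQ_le_of_lt hx hx01 hΨ (n + 1) h)
  exact mem_iUnion.2 ⟨(⟨_, hr⟩, k, b), by rwa [approxCover, hk]⟩

theorem GSet_subset_limsup_approxCover {Ψ : ℝ → ℝ} (hΨ : ∀ᶠ q : ℕ in atTop, 0 < Ψ q) :
    GSet Ψ ⊆ limsup (fun q => ⋃ j, approxCover Ψ q j) atTop := by
  rintro x ⟨hx0, hx, hinf⟩
  have hx01 : x ∈ Ioo 0 1 := ⟨hx0.1.lt_of_ne' hx.ne_zero, hx0.2⟩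
  have hq : Tendsto (cfQ x) atTop atTop :=
    tendsto_atTop_mono (le_cfQ (one_le_cfA_succ hx hx01)) tendsto_id
  rw [mem_limsup_iff_frequently_mem]
  refine hq.frequently <| ((Nat.frequently_atTop_iff_infinite.2 hinf).and_eventually
    ((hq.eventually hΨ).and (eventually_ge_atTop 2))).mono ?_
  rintro n ⟨⟨-, hn⟩, hΨn, hn2⟩
  obtain ⟨m, rfl⟩ : ∃ m, n = m + 2 := ⟨n - 2, by omega⟩
  exact mem_iUnion_approxCover hx hx01 m hΨn hn

theorem ediam_approxCover_le {Ψ : ℝ → ℝ} {q : ℕ} {c : ℝ} (hc : 0 < c) (hcΨ : c ≤ Ψ q)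
    (j : Finset.Icc 1 q × Fin 2 × Bool) :
    Metric.ediam (approxCover Ψ q j) ≤ ENNReal.ofReal (1 / (q * c)) := by
  obtain ⟨hr, hrq⟩ := Finset.mem_Icc.1 j.1.2
  have hq : (0 : ℝ) < q := by exact_mod_cast hr.trans hrq
  replace hr : (1 : ℝ) ≤ (j.1 : ℕ) := by exact_mod_cast hr
  rw [approxCover, ediam_halfInterval]
  gcongr
  exact le_mul_of_one_le_left hq.le hr

theorem tsum_ofReal_ediam_approxCover (f Ψ : ℝ → ℝ) (q : ℕ) (hΨ : 0 ≤ Ψ q) :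
    ∑' j, ENNReal.ofReal (f (Metric.ediam (approxCover Ψ q j)).toReal)
      = 4 * ∑ r ∈ Finset.Icc 1 q, ENNReal.ofReal (f (1 / (r * q * Ψ q))) := by
  rw [tsum_fintype, Fintype.sum_prod_type, ← Finset.sum_coe_sort (Finset.Icc 1 q),
    Finset.mul_sum]
  refine Finset.sum_congr rfl fun r _ => ?_
  simp [approxCover, ediam_halfInterval, ENNReal.toReal_ofReal, hΨ]

theorem tsum_tsum_ofReal_ediam_approxCover_ne_top {f Ψ : ℝ → ℝ} {Q₀ : ℕ}
    (hf : ∀ y, 0 < y → 0 ≤ f y) (hΨ : ∀ q, Q₀ ≤ q → 0 < Ψ q)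
    (hsum : Summable fun q : ℕ => ∑ p ∈ Finset.Icc 1 q, f (1 / ((p : ℝ) * q * Ψ q))) :
    ∑' k, ∑' j, ENNReal.ofReal (f (Metric.ediam (approxCover Ψ (k + Q₀) j)).toReal) ≠ ∞ := by
  have hf_nonneg (k p : ℕ) (hp : p ∈ Finset.Icc 1 (k + Q₀)) :
      0 ≤ f (1 / ((p : ℝ) * (k + Q₀ : ℕ) * Ψ (k + Q₀ : ℕ))) := by
    obtain ⟨hp1, hpq⟩ := Finset.mem_Icc.1 hp
    have hp' : (0 : ℝ) < p := by exact_mod_cast hp1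
    have hq : (0 : ℝ) < (k + Q₀ : ℕ) := by exact_mod_cast (by omega : 0 < k + Q₀)
    exact hf _ (one_div_pos.2 (mul_pos (mul_pos hp' hq) (hΨ _ (by omega))))
  have hterm (k : ℕ) : ∑' j, ENNReal.ofReal (f (Metric.ediam (approxCover Ψ (k + Q₀) j)).toReal)
      = 4 * ENNReal.ofReal (∑ p ∈ Finset.Icc 1 (k + Q₀),
          f (1 / ((p : ℝ) * (k + Q₀ : ℕ) * Ψ (k + Q₀ : ℕ)))) := by
    rw [tsum_ofReal_ediam_approxCover f Ψ _ (hΨ _ (by omega)).le,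
      ENNReal.ofReal_sum_of_nonneg (hf_nonneg k)]
  rw [tsum_congr hterm, ENNReal.tsum_mul_left, ← ENNReal.ofReal_tsum_of_nonneg]
  · exact ENNReal.mul_ne_top ENNReal.ofNat_ne_top ENNReal.ofReal_ne_top
  · exact fun k => Finset.sum_nonneg (hf_nonneg k)
  · exact hsum.comp_injective (add_left_injective Q₀)

/-- **Convergence part of the zero-infinity law for `G(Ψ)` via the double series.**
If `Ψ : [t₀,∞) → (0,∞)` is non-decreasing, `f` is a dimension function, and
`∑_q ∑_{1 ≤ p ≤ q} f(1/(p q Ψ(q)))` converges, then `H^f(G(Ψ)) = 0`. -/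
theorem hausdorffWith_GSet_eq_zero_of_summable_double
    (t₀ : ℝ) (Ψ : ℝ → ℝ)
    (hΨpos : ∀ t ∈ Ici t₀, 0 < Ψ t) (hΨmono : MonotoneOn Ψ (Ici t₀))
    (f : ℝ → ℝ) (hf : IsDimensionFunction f)
    (hsum : Summable fun q : ℕ => ∑ p ∈ Finset.Icc 1 q, f (1 / ((p : ℝ) * q * Ψ q))) :
    hausdorffWith f (GSet Ψ) = 0 := by
  set Q₀ := ⌈t₀⌉₊ + 1
  have hQ₀ : ∀ q : ℕ, Q₀ ≤ q → (q : ℝ) ∈ Ici t₀ := fun q hq =>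
    (Nat.le_ceil t₀).trans (by exact_mod_cast (by omega : ⌈t₀⌉₊ ≤ q))
  have hΨQ₀ : 0 < Ψ Q₀ := hΨpos _ (hQ₀ Q₀ le_rfl)
  refine measure_mono_null (GSet_subset_limsup_approxCover ?_) ?_
  · filter_upwards [eventually_ge_atTop Q₀] with q hq using hΨpos _ (hQ₀ q hq)
  rw [← limsup_nat_add _ Q₀]
  refine Measure.mkMetric_limsup_eq_zero _ (fun k => approxCover Ψ (k + Q₀))
    (fun k => ENNReal.ofReal (1 / ((k + Q₀ : ℕ) * Ψ Q₀))) ?_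
    (fun k => ediam_approxCover_le hΨQ₀ (hΨmono (hQ₀ Q₀ le_rfl) (hQ₀ (k + Q₀) (by omega))
      (mod_cast Nat.le_add_left Q₀ k))) ?_
  · have h := ((tendsto_natCast_atTop_atTop.comp (tendsto_add_atTop_nat Q₀)).atTop_mul_const
      hΨQ₀).inv_tendsto_atTop
    simpa using ENNReal.tendsto_ofReal h
  · exact tsum_tsum_ofReal_ediam_approxCover_ne_top (fun y hy => (hf.1 y hy).le)
      (fun q hq => hΨpos _ (hQ₀ q hq)) hsum
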